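/- Let P be a poset, C a cocomplete category, and F : P ⥤ C a functor. Let ι : P ⥤ Down(P) send p to the principal down-set D_p. Then F̂ := Lan_ι F : Down(P) ⥤ C is a cosheaf on P with the Alexandrov topology: for every down-set S and every Čech cover 𝒰 of S (a cover of S by down-sets such that whenever a finite subcollection of 𝒰 has nonempty intersection, that intersection belongs to 𝒰), the canonical map colim_{U ∈ 𝒰} F̂(U) → F̂(S) is an isomorphism. -/

import Mathlib

/-!
The left Kan extension of `F : P ⥤ C` along `ι : P ⥤ Down(P)`, `p ↦ D_p`, is a
*cosheaf* on `P` with the Alexandrov topology: for every down-set `S` and every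
Čech cover `𝒰` of `S`, the canonical map `colim_{U ∈ 𝒰} F̂(U) → F̂(S)` is an
isomorphism.
-/

open CategoryTheory Limits

universe u v w

variable {P : Type v} [PartialOrder P]

/-- The functor `ι : P ⥤ Down(P)` sending `p` to its principal down-set `D_p`. -/
def principalDownFunctor (P : Type v) [PartialOrder P] : P ⥤ LowerSet P :=
  Monotone.functor (f := fun p => LowerSet.Iic p)
    (fun _ _ h => LowerSet.coe_subset_coe.mp
      (fun _ hx => le_trans (LowerSet.mem_Iic_iff.mp hx) h))

/-- The inclusion `ι_𝒰 : 𝒰 ⥤ Down(P)` of a collection of down-sets,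
viewed as a full subposet, into `Down(P)`. -/
def coverInclusion (𝒰 : Set (LowerSet P)) : ↥𝒰 ⥤ LowerSet P :=
  Monotone.functor (f := Subtype.val) (fun _ _ h => h)

variable {C : Type u} [Category.{w} C]

/-- Given a collection `𝒰` of down-sets all contained in `S`, the cocone on
`G ∘ ι_𝒰` with point `G(S)` whose legs are the maps `G(U) → G(S)`. -/
def coverCocone (G : LowerSet P ⥤ C) {S : LowerSet P} {𝒰 : Set (LowerSet P)}
    (h : ∀ U ∈ 𝒰, U ≤ S) : Cocone (coverInclusion 𝒰 ⋙ G) where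
  pt := G.obj S
  ι :=
    { app := fun U => G.map (homOfLE (h U U.2))
      naturality := fun U V f => by
        dsimp
        rw [Category.comp_id, ← G.map_comp]
        congr 1 }

/-- Every member of a cover of `S` is contained in `S`. -/
lemma coverLE {𝒰 : Set (LowerSet P)} {S : LowerSet P}
    (hcover : (⋃ U ∈ 𝒰, (U : Set P)) = (S : Set P)) : ∀ U ∈ 𝒰, U ≤ S := by
  intro U hU
  rw [← LowerSet.coe_subset_coe, ← hcover]
  exact Set.subset_biUnion_of_mem hU

/-- The object of `CostructuredArrow ι U` determined by `p ∈ U`. -/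
def elt (U : LowerSet P) {p : P} (hp : p ∈ U) :
    CostructuredArrow (principalDownFunctor P) U :=
  CostructuredArrow.mk (homOfLE (fun q hq => U.lower (LowerSet.mem_Iic_iff.mp hq) hp))

lemma ι_map_elt [HasColimitsOfSize.{v, v} C] (F : P ⥤ C) {W U : LowerSet P}
    (hWU : W ≤ U) {p : P} (hp : p ∈ W) :
    colimit.ι (CostructuredArrow.proj (principalDownFunctor P) W ⋙ F) (elt W hp) ≫
      ((principalDownFunctor P).pointwiseLeftKanExtension F).map (homOfLE hWU) =
    colimit.ι (CostructuredArrow.proj (principalDownFunctor P) U ⋙ F) (elt U (hWU hp)) := by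
  refine (colimit.ι_desc _ _).trans ?_
  dsimp only
  congr 1

lemma key [HasColimitsOfSize.{v, v} C] (F : P ⥤ C) (𝒰 : Set (LowerSet P))
    (hcech : ∀ t ⊆ 𝒰, t.Finite → t.Nonempty →
      (⋂ V ∈ t, (V : Set P)).Nonempty →
      ∃ W ∈ 𝒰, (W : Set P) = ⋂ V ∈ t, (V : Set P))
    (c : Cocone (coverInclusion 𝒰 ⋙ (principalDownFunctor P).pointwiseLeftKanExtension F))
    {U V : LowerSet P} (hU : U ∈ 𝒰) (hV : V ∈ 𝒰) {p : P} (hpU : p ∈ U) (hpV : p ∈ V) :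
    colimit.ι (CostructuredArrow.proj (principalDownFunctor P) U ⋙ F) (elt U hpU) ≫
      c.ι.app ⟨U, hU⟩ =
    colimit.ι (CostructuredArrow.proj (principalDownFunctor P) V ⋙ F) (elt V hpV) ≫
      c.ι.app ⟨V, hV⟩ := by
  obtain ⟨W, hW, hWeq⟩ := hcech {U, V}
    (Set.insert_subset_iff.mpr ⟨hU, Set.singleton_subset_iff.mpr hV⟩) (Set.toFinite _)
    ⟨U, Set.mem_insert _ _⟩ ⟨p, by rw [Set.biInter_pair]; exact ⟨hpU, hpV⟩⟩
  rw [Set.biInter_pair] at hWeq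
  have hWU : W ≤ U := by
    rw [← LowerSet.coe_subset_coe, hWeq]; exact Set.inter_subset_left
  have hWV : W ≤ V := by
    rw [← LowerSet.coe_subset_coe, hWeq]; exact Set.inter_subset_right
  have hpW : p ∈ W := by
    rw [← SetLike.mem_coe, hWeq]; exact ⟨hpU, hpV⟩
  have hU' : ((principalDownFunctor P).pointwiseLeftKanExtension F).map (homOfLE hWU) ≫
      c.ι.app ⟨U, hU⟩ = c.ι.app ⟨W, hW⟩ :=
    c.w (homOfLE hWU : (⟨W, hW⟩ : ↥𝒰) ⟶ ⟨U, hU⟩)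
  have hV' : ((principalDownFunctor P).pointwiseLeftKanExtension F).map (homOfLE hWV) ≫
      c.ι.app ⟨V, hV⟩ = c.ι.app ⟨W, hW⟩ :=
    c.w (homOfLE hWV : (⟨W, hW⟩ : ↥𝒰) ⟶ ⟨V, hV⟩)
  have e1 := congrArg (fun t => t ≫ c.ι.app ⟨U, hU⟩) (ι_map_elt F hWU hpW)
  have e2 := congrArg (fun t => t ≫ c.ι.app ⟨V, hV⟩) (ι_map_elt F hWV hpW)
  exact e1.symm.trans ((Category.assoc _ _ _).trans ((congrArg (fun t => colimit.ι (CostructuredArrow.proj (principalDownFunctor P) W ⋙ F) (elt W hpW) ≫ t)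
    (hU'.trans hV'.symm)).trans ((Category.assoc _ _ _).symm.trans e2)))

lemma eq_elt (U : LowerSet P) (j : CostructuredArrow (principalDownFunctor P) U)
    (hj : j.left ∈ U) : j = elt U hj := by
  obtain ⟨p, ⟨⟨⟩⟩, f⟩ := j
  unfold elt CostructuredArrow.mk
  congr

lemma hom_ext_obj [HasColimitsOfSize.{v, v} C] (F : P ⥤ C) (S : LowerSet P) {X : C}
    {f g : ((principalDownFunctor P).pointwiseLeftKanExtension F).obj S ⟶ X}
    (w : ∀ j, colimit.ι (CostructuredArrow.proj (principalDownFunctor P) S ⋙ F) j ≫ f =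
      colimit.ι (CostructuredArrow.proj (principalDownFunctor P) S ⋙ F) j ≫ g) : f = g :=
  colimit.hom_ext w

lemma memS {U : LowerSet P} (j : CostructuredArrow (principalDownFunctor P) U) :
    j.left ∈ U :=
  LowerSet.coe_subset_coe.mpr (leOfHom j.hom) (LowerSet.mem_Iic_iff.mpr le_rfl)


/-- **Left Kan extensions of functors on posets are cosheaves.**
Let `F : P ⥤ C` with `C` cocomplete, and let `F̂ := Lan_ι F` be the pointwise left
Kan extension of `F` along `ι : P ⥤ Down(P)`, `p ↦ D_p`.  For every down-set `S`
and every Čech cover `𝒰` of `S` (a cover of `S` by down-sets such that every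
nonempty intersection of a nonempty finite subcollection of `𝒰` again belongs to
`𝒰`), the canonical map `colim_{U ∈ 𝒰} F̂(U) → F̂(S)` is an isomorphism. -/
theorem lan_isCosheaf [HasColimitsOfSize.{v, v} C] (F : P ⥤ C)
    (S : LowerSet P) (𝒰 : Set (LowerSet P))
    (hcover : (⋃ U ∈ 𝒰, (U : Set P)) = (S : Set P))
    (hcech : ∀ t ⊆ 𝒰, t.Finite → t.Nonempty →
      (⋂ V ∈ t, (V : Set P)).Nonempty →
      ∃ W ∈ 𝒰, (W : Set P) = ⋂ V ∈ t, (V : Set P)) :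
    IsIso (colimit.desc
      (coverInclusion 𝒰 ⋙ (principalDownFunctor P).pointwiseLeftKanExtension F)
      (coverCocone ((principalDownFunctor P).pointwiseLeftKanExtension F)
        (coverLE hcover))) := by
  classical
  have hmem : ∀ p : P, p ∈ S → ∃ U, U ∈ 𝒰 ∧ p ∈ U := by
    intro p hp
    rw [← SetLike.mem_coe, ← hcover] at hp
    simpa using hp
  choose u hu hpu using hmem
  have hc : IsColimit (coverCocone ((principalDownFunctor P).pointwiseLeftKanExtension F)
      (coverLE hcover)) := by
    refine
      { desc := fun c => colimit.desc _
          { pt := c.pt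
            ι :=
              { app := fun j =>
                  colimit.ι (CostructuredArrow.proj (principalDownFunctor P)
                      (u j.left (memS j)) ⋙ F) (elt _ (hpu j.left (memS j))) ≫
                    c.ι.app ⟨_, hu j.left (memS j)⟩
                naturality := ?_ } }
        fac := ?_
        uniq := ?_ }
    · intro j j' φ
      dsimp
      rw [Category.comp_id]
      have hle : j.left ≤ j'.left := leOfHom φ.left
      have h1 : j.left ∈ u j'.left (memS j') := (u j'.left (memS j')).lower hle (hpu _ _)
      have hw : F.map φ.left ≫
          colimit.ι (CostructuredArrow.proj (principalDownFunctor P)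
            (u j'.left (memS j')) ⋙ F) (elt _ (hpu j'.left (memS j'))) =
          colimit.ι (CostructuredArrow.proj (principalDownFunctor P)
            (u j'.left (memS j')) ⋙ F) (elt _ h1) := by
        exact colimit.w (CostructuredArrow.proj (principalDownFunctor P)
            (u j'.left (memS j')) ⋙ F)
          (CostructuredArrow.homMk (f := elt _ h1) (f' := elt _ (hpu j'.left (memS j')))
            φ.left (Subsingleton.elim _ _))
      refine Eq.trans (Category.assoc (F.map φ.left) _ _).symm ?_
      refine (congrArg (fun t => t ≫ c.ι.app ⟨_, hu j'.left (memS j')⟩) hw).trans ?_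
      exact key F 𝒰 hcech c (hu j'.left (memS j')) (hu j.left (memS j)) h1 (hpu _ _)
    · intro c U
      refine colimit.hom_ext fun j => ?_
      beta_reduce
      have hj : j.left ∈ ((coverInclusion 𝒰).obj U) := memS j
      rw [eq_elt _ j hj]
      have hcc : (coverCocone ((principalDownFunctor P).pointwiseLeftKanExtension F)
            (coverLE hcover)).ι.app U =
          ((principalDownFunctor P).pointwiseLeftKanExtension F).map
            (homOfLE (show (coverInclusion 𝒰).obj U ≤ S from coverLE hcover U U.2)) := rfl
      refine (Category.assoc _ _ _).symm.trans ?_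
      refine (congrArg (fun t => t ≫ colimit.desc _ _)
        (ι_map_elt F (show (coverInclusion 𝒰).obj U ≤ S from coverLE hcover U U.2) hj)).trans ?_
      refine (colimit.ι_desc _ _).trans ?_
      exact key F 𝒰 hcech c (hu _ _) U.2 (hpu _ _) hj
    · intro c m hm
      refine hom_ext_obj F S fun j => ?_
      beta_reduce
      have hj : j.left ∈ S := memS j
      rw [eq_elt _ j hj, colimit.ι_desc]
      have hstep : colimit.ι (CostructuredArrow.proj (principalDownFunctor P) S ⋙ F)
            (elt S hj) =
          colimit.ι (CostructuredArrow.proj (principalDownFunctor P) (u j.left hj) ⋙ F)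
            (elt _ (hpu j.left hj)) ≫
          ((principalDownFunctor P).pointwiseLeftKanExtension F).map
            (homOfLE (coverLE hcover _ (hu j.left hj))) := by
        rw [ι_map_elt]
      rw [hstep]
      refine (Category.assoc _ _ _).trans ?_
      have h2 : ((principalDownFunctor P).pointwiseLeftKanExtension F).map
            (homOfLE (coverLE hcover _ (hu j.left hj))) ≫ m =
          c.ι.app ⟨u j.left hj, hu j.left hj⟩ := hm ⟨u j.left hj, hu j.left hj⟩
      refine (congrArg (fun t => colimit.ι (CostructuredArrow.proj (principalDownFunctor P)
        (u j.left hj) ⋙ F) (elt _ (hpu j.left hj)) ≫ t) h2).trans ?_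
      exact key F 𝒰 hcech c (hu _ _) (hu _ _) (hpu _ _) (hpu _ _)
  have heq : colimit.desc
      (coverInclusion 𝒰 ⋙ (principalDownFunctor P).pointwiseLeftKanExtension F)
      (coverCocone ((principalDownFunctor P).pointwiseLeftKanExtension F)
        (coverLE hcover)) =
      (IsColimit.coconePointUniqueUpToIso (colimit.isColimit _) hc).hom := by
    refine colimit.hom_ext fun j => ?_
    simp
  rw [heq]
  infer_instance
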